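/- arXiv:1807.06607 — 3 statements merged into one kernel-verified Lean document; each statement's English description precedes it below -/
import Mathlib

section
/- Let δ ≥ γ > 0 and let G be an r-edge-coloured graph on t vertices with minimum degree at least δt. Then G contains a spanning subgraph R with minimum degree at least (δ − γ)t which is the union of at most r²/γ monochromatic components. -/
/-- The monochromatic subgraph of `G` in colour `j`, for an edge-colouring `c`. -/
def colourSubgraph {V : Type*} (G : SimpleGraph V) {r : ℕ} (c : Sym2 V → Fin r) (j : Fin r) :
    SimpleGraph V :=
  SimpleGraph.fromEdgeSet {e | e ∈ G.edgeSet ∧ c e = j}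

/-!
Keep exactly the monochromatic components with at least `γt/r` vertices and let `R` be the union
of their edges. In each colour the components partition the `t` vertices, so at most `r/γ` of them
are that large, and at most `r²/γ` are kept. An edge `vu` of `G` is lost only if the component of
`v` in the colour of `vu` is small; such a component holds fewer than `γt/r` neighbours of `v`,
so over the `r` colours `v` loses at most `γt` neighbours.
-/

namespace SimpleGraph

variable {V ι : Type*}

lemma neighborSet_subset_supp_connectedComponentMk (G : SimpleGraph V) (v : V) :
    G.neighborSet v ⊆ (G.connectedComponentMk v).supp := fun _ huv =>
  (ConnectedComponent.connectedComponentMk_eq_of_adj huv).symm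

lemma sum_ncard_supp [Fintype V] (G : SimpleGraph V) [Fintype G.ConnectedComponent] :
    ∑ C : G.ConnectedComponent, C.supp.ncard = Fintype.card V := by
  rw [← Nat.card_eq_fintype_card, ← Set.ncard_univ, ← G.iUnion_connectedComponentSupp,
    Set.ncard_iUnion_of_finite (fun _ => Set.toFinite _)
      G.pairwise_disjoint_supp_connectedComponent, finsum_eq_sum_of_fintype]

/-- A monochromatic component is encoded as a pair `⟨j, C⟩` with `C` a component of `H j`. -/
def componentUnion (H : ι → SimpleGraph V) (S : Set (Σ j, (H j).ConnectedComponent)) :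
    SimpleGraph V where
  Adj u v := ∃ p ∈ S, (H p.1).Adj u v ∧ (H p.1).connectedComponentMk u = p.2
  symm := ⟨fun _ _ ⟨p, hp, huv, hu⟩ =>
    ⟨p, hp, huv.symm, (ConnectedComponent.connectedComponentMk_eq_of_adj huv).symm.trans hu⟩⟩
  loopless := ⟨fun _ ⟨_, _, huu, _⟩ => huu.ne rfl⟩

variable {H : ι → SimpleGraph V}

@[simp]
lemma componentUnion_adj {S : Set (Σ j, (H j).ConnectedComponent)} {u v : V} :
    (componentUnion H S).Adj u v ↔
      ∃ p ∈ S, (H p.1).Adj u v ∧ (H p.1).connectedComponentMk u = p.2 :=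
  Iff.rfl

lemma componentUnion_le {G : SimpleGraph V} (hH : ∀ j, H j ≤ G)
    (S : Set (Σ j, (H j).ConnectedComponent)) : componentUnion H S ≤ G :=
  fun _ _ huv => by
    obtain ⟨p, -, huv, -⟩ := componentUnion_adj.mp huv
    exact hH p.1 huv

lemma ncard_mul_le_of_le_ncard_supp [Fintype ι] [Fintype V]
    {S : Set (Σ j, (H j).ConnectedComponent)} {m : ℝ}
    (hS : ∀ p ∈ S, m ≤ p.2.supp.ncard) :
    S.ncard * m ≤ Fintype.card ι * Fintype.card V := by
  classical
  calc (S.ncard : ℝ) * m = ∑ p ∈ S.toFinset, m := by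
        rw [Finset.sum_const, nsmul_eq_mul, Set.ncard_eq_toFinset_card']
    _ ≤ ∑ p ∈ S.toFinset, ((p : Σ j, (H j).ConnectedComponent).2.supp.ncard : ℝ) :=
        Finset.sum_le_sum fun p hp => hS p (Set.mem_toFinset.mp hp)
    _ ≤ ∑ p : Σ j, (H j).ConnectedComponent, (p.2.supp.ncard : ℝ) :=
        Finset.sum_le_sum_of_subset_of_nonneg (Finset.subset_univ _) fun _ _ _ => by positivity
    _ = ∑ j, ∑ C : (H j).ConnectedComponent, (C.supp.ncard : ℝ) := Fintype.sum_sigma _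
    _ = Fintype.card ι * Fintype.card V := by
        simp only [← Nat.cast_sum, sum_ncard_supp, Finset.sum_const, Finset.card_univ,
          smul_eq_mul, Nat.cast_mul]

lemma ncard_neighborSet_le_componentUnion_add [Fintype ι] [Finite V] {G : SimpleGraph V}
    (hG : ∀ u v, G.Adj u v → ∃ j, (H j).Adj u v) {m : ℝ} (hm : 0 ≤ m) (v : V) :
    ((G.neighborSet v).ncard : ℝ) ≤
      ((componentUnion H {p | m ≤ p.2.supp.ncard}).neighborSet v).ncard +
        Fintype.card ι * m := by
  classical
  set R := componentUnion H {p | m ≤ p.2.supp.ncard}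
  set small := Finset.univ.filter fun j => ((H j).connectedComponentMk v).supp.ncard < m
  have hcover : G.neighborSet v ⊆ R.neighborSet v ∪ ⋃ j ∈ small, (H j).neighborSet v := by
    intro u hu
    obtain ⟨j, hj⟩ := hG v u hu
    by_cases hbig : m ≤ ((H j).connectedComponentMk v).supp.ncard
    · exact Or.inl (componentUnion_adj.mpr ⟨⟨j, _⟩, hbig, hj, rfl⟩)
    · exact Or.inr <| Set.mem_biUnion
        (Finset.mem_filter.mpr ⟨Finset.mem_univ _, not_le.mp hbig⟩) hj
  have hsmall : ∀ j ∈ small, (((H j).neighborSet v).ncard : ℝ) ≤ m := fun j hj =>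
    le_trans (mod_cast Set.ncard_le_ncard ((H j).neighborSet_subset_supp_connectedComponentMk v))
      (Finset.mem_filter.mp hj).2.le
  calc ((G.neighborSet v).ncard : ℝ)
      ≤ (R.neighborSet v).ncard + ∑ j ∈ small, ((H j).neighborSet v).ncard := by
        exact_mod_cast (Set.ncard_le_ncard hcover).trans <| (Set.ncard_union_le _ _).trans <|
          Nat.add_le_add_left (small.set_ncard_biUnion_le _) _
    _ ≤ (R.neighborSet v).ncard + ∑ _j ∈ small, m := by
        push_cast
        gcongr with j hj
        exact hsmall j hj
    _ ≤ (R.neighborSet v).ncard + Fintype.card ι * m := by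
        rw [Finset.sum_const, nsmul_eq_mul]
        gcongr
        exact_mod_cast small.card_le_univ

end SimpleGraph

lemma Set.exists_mem_iff_exists_fin {α : Type*} {S : Set α} [Finite S] {P : α → Prop} :
    (∃ a ∈ S, P a) ↔ ∃ i : Fin (Nat.card S), P ((Finite.equivFin S).symm i) := by
  rw [← (Finite.equivFin S).exists_congr_left (p := fun a : S => P a), Subtype.exists, bex_def]

section colourSubgraph

variable {V : Type*} (G : SimpleGraph V) {r : ℕ} (c : Sym2 V → Fin r)

lemma colourSubgraph_adj {j : Fin r} {u v : V} :
    (colourSubgraph G c j).Adj u v ↔ G.Adj u v ∧ c s(u, v) = j := by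
  simp only [colourSubgraph, SimpleGraph.fromEdgeSet_adj, Set.mem_ofPred_eq,
    SimpleGraph.mem_edgeSet, and_iff_left_iff_imp, and_imp]
  exact fun huv _ => huv.ne

lemma colourSubgraph_le (j : Fin r) : colourSubgraph G c j ≤ G :=
  fun _ _ huv => ((colourSubgraph_adj G c).mp huv).1

lemma exists_colourSubgraph_adj {u v : V} (huv : G.Adj u v) :
    ∃ j, (colourSubgraph G c j).Adj u v :=
  ⟨c s(u, v), (colourSubgraph_adj G c).mpr ⟨huv, rfl⟩⟩

end colourSubgraph

open SimpleGraph in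
theorem stmt0_general {V : Type*} [Fintype V] (r : ℕ) (G : SimpleGraph V) (c : Sym2 V → Fin r)
    (δ γ : ℝ) (hγ : 0 < γ)
    (hdeg : ∀ v, δ * (Fintype.card V : ℝ) ≤ ((G.neighborSet v).ncard : ℝ)) :
    ∃ R : SimpleGraph V, R ≤ G ∧
      (∀ v, (δ - γ) * (Fintype.card V : ℝ) ≤ ((R.neighborSet v).ncard : ℝ)) ∧
      ∃ s : ℕ, (s : ℝ) ≤ (r : ℝ) ^ 2 / γ ∧
        ∃ (col : Fin s → Fin r)
          (K : ∀ i : Fin s, (colourSubgraph G c (col i)).ConnectedComponent),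
          ∀ u v : V, R.Adj u v ↔ ∃ i : Fin s,
            (colourSubgraph G c (col i)).Adj u v ∧
            (colourSubgraph G c (col i)).connectedComponentMk u = K i := by
  rcases isEmpty_or_nonempty V with hV | ⟨⟨v₀⟩⟩
  · exact ⟨⊥, bot_le, isEmptyElim, 0, by simp only [Nat.cast_zero]; positivity, Fin.elim0,
      fun i => i.elim0, isEmptyElim⟩
  have hr : (0 : ℝ) < r := by exact_mod_cast Fin.pos (c s(v₀, v₀))
  have ht : (0 : ℝ) < Fintype.card V := by exact_mod_cast Fintype.card_pos_iff.mpr ⟨v₀⟩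
  set m := γ * Fintype.card V / r
  set S := {p : Σ j, (colourSubgraph G c j).ConnectedComponent | m ≤ p.2.supp.ncard}
  refine ⟨componentUnion _ S, componentUnion_le (colourSubgraph_le G c) S, fun v => ?_,
    Nat.card S, ?_, fun i => ((Finite.equivFin S).symm i).1.1,
    fun i => ((Finite.equivFin S).symm i).1.2, fun u v => Set.exists_mem_iff_exists_fin⟩
  · have hloss := ncard_neighborSet_le_componentUnion_add
      (fun _ _ => exists_colourSubgraph_adj G c) (by positivity : 0 ≤ m) v
    rw [Fintype.card_fin, mul_div_cancel₀ _ hr.ne'] at hloss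
    linarith [hdeg v]
  · have hcount : S.ncard * m ≤ r * Fintype.card V := by
      simpa using ncard_mul_le_of_le_ncard_supp (S := S) fun _ hp => hp
    rw [Nat.card_coe_set_eq, le_div_iff₀ hγ]
    refine le_of_mul_le_mul_right ?_ ht
    calc S.ncard * γ * Fintype.card V = r * (S.ncard * m) := by
          simp only [m]; field_simp
      _ ≤ r * (r * Fintype.card V) := by gcongr
      _ = r ^ 2 * Fintype.card V := by ring

/-- Lemma 7.1: an `r`-edge-coloured graph on `t` vertices with minimum degree at least `δt`
contains a spanning subgraph `R` with minimum degree at least `(δ-γ)t` which is the union of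
at most `r²/γ` monochromatic components. -/
theorem stmt0 {V : Type*} [Fintype V] (r : ℕ) (G : SimpleGraph V) (c : Sym2 V → Fin r)
    (δ γ : ℝ) (hγ : 0 < γ) (hγδ : γ ≤ δ)
    (hdeg : ∀ v, δ * (Fintype.card V : ℝ) ≤ ((G.neighborSet v).ncard : ℝ)) :
    ∃ R : SimpleGraph V, R ≤ G ∧
      (∀ v, (δ - γ) * (Fintype.card V : ℝ) ≤ ((R.neighborSet v).ncard : ℝ)) ∧
      ∃ s : ℕ, (s : ℝ) ≤ (r : ℝ) ^ 2 / γ ∧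
        ∃ (col : Fin s → Fin r)
          (K : ∀ i : Fin s, (colourSubgraph G c (col i)).ConnectedComponent),
          ∀ u v : V, R.Adj u v ↔ ∃ i : Fin s,
            (colourSubgraph G c (col i)).Adj u v ∧
            (colourSubgraph G c (col i)).connectedComponentMk u = K i :=
  stmt0_general r G c δ γ hγ hdeg
end

section
/- Let r ≥ 2 and let G be a graph with disjoint vertex sets U, W where |W| ≤ t, such that (i) every r-set S ⊆ W has common neighbourhood of size at least 6·r^{r+1}·t in U, and (ii) any disjoint X, Y ⊆ U with |X|, |Y| ≥ t satisfy e_G(X,Y) > 0. Define, for any r-edge-colouring of G with colours [r], an auxiliary multigraph H on vertex set W where v, v' are joined by an edge of colour j if either (a) there are at least 2t vertices u ∈ U such that the path v u v' is monochromatic in colour j, or (b) there is a matching M of size 2t inside U such that for each edge uu' ∈ M the path v u u' v' (or v u' u v') is monochromatic in colour j. Then the independence number of H is at most 2r − 1. -/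
/-!
Split a `2r`-set `S ⊆ W` into halves `S₁, S₂` of size `r`. By pigeonhole on the `r ^ r` colour
patterns, the common neighbourhood of `Sᵢ` contains a set `Aᵢ` of `6rt` vertices on which every
`v ∈ Sᵢ` sends edges of one colour only. If two vertices of `Sᵢ` share that colour they are joined
in `H` by (a). Otherwise each half uses all `r` colours. Make `A₁, A₂` disjoint; condition (ii)
then gives, greedily, a matching of size `2rt` between them, of which `2t` edges share a colour
`j`, and the vertices of colour `j` in `S₁` and `S₂` are joined in `H` by (b).
-/

open Finset

theorem exists_le_card_filter_eq {α β : Type*} [Fintype β] [Nonempty β] [DecidableEq β]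
    (s : Finset α) (f : α → β) {n : ℕ} (h : Fintype.card β * n ≤ #s) :
    ∃ b, n ≤ #(s.filter fun a => f a = b) := by
  obtain ⟨b, -, hb⟩ := exists_le_card_fiber_of_mul_le_card_of_maps_to
    (fun a _ => mem_univ (f a)) univ_nonempty (by rwa [card_univ])
  exact ⟨b, hb⟩

theorem exists_disjoint_subsets_of_le_card {α : Type*} [DecidableEq α] {s t : Finset α} {n : ℕ}
    (hs : n ≤ #s) (ht : 2 * n ≤ #t) :
    ∃ s' ⊆ s, ∃ t' ⊆ t, Disjoint s' t' ∧ n ≤ #s' ∧ n ≤ #t' := by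
  obtain ⟨s', hs's, hs'⟩ := s.exists_subset_card_eq hs
  refine ⟨s', hs's, t \ s', sdiff_subset, disjoint_sdiff, hs'.ge, ?_⟩
  have := le_card_sdiff s' t
  omega

theorem exists_colour_constant_subset {V : Type*} [DecidableEq V] {r : ℕ} [NeZero r]
    (c : Sym2 V → Fin r) (S N : Finset V) {m : ℕ} (h : r ^ #S * m ≤ #N) :
    ∃ A ⊆ N, m ≤ #A ∧ ∃ col : S → Fin r, ∀ v : S, ∀ u ∈ A, c s(↑v, u) = col v := by
  obtain ⟨col, hcol⟩ := exists_le_card_filter_eq N (fun u (v : S) => c s(↑v, u)) (n := m)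
    (by simpa using h)
  exact ⟨_, filter_subset _ _, hcol, col, fun v u hu => congrFun (mem_filter.mp hu).2 v⟩

namespace SimpleGraph

variable {V : Type*} [DecidableEq V] (G : SimpleGraph V) [DecidableRel G.Adj]

/-- Greedy: while both sides keep `t` vertices, the hypothesis supplies one more edge. -/
theorem exists_matching_subset_interedges {t : ℕ} {X Y : Finset V}
    (h : ∀ X' ⊆ X, ∀ Y' ⊆ Y, t ≤ #X' → t ≤ #Y' → (G.interedges X' Y').Nonempty)
    {k : ℕ} (hX : t + k ≤ #X) (hY : t + k ≤ #Y) :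
    ∃ M ⊆ G.interedges X Y, #M = k ∧
      Set.InjOn Prod.fst (M : Set (V × V)) ∧ Set.InjOn Prod.snd (M : Set (V × V)) := by
  induction k generalizing X Y with
  | zero => exact ⟨∅, empty_subset _, rfl, by simp, by simp⟩
  | succ k ih =>
    obtain ⟨⟨a, b⟩, hab⟩ := h X subset_rfl Y subset_rfl (by omega) (by omega)
    obtain ⟨ha, hb, hadj⟩ := G.mem_interedges_iff.mp hab
    obtain ⟨M, hM, hMk, hfst, hsnd⟩ := ih
      (fun X' hX' Y' hY' => h X' (hX'.trans (erase_subset a X)) Y' (hY'.trans (erase_subset b Y)))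
      (by rw [card_erase_of_mem ha]; omega) (by rw [card_erase_of_mem hb]; omega)
    have hMfst : ∀ e ∈ M, e.1 ≠ a := fun e he =>
      ne_of_mem_erase (G.mem_interedges_iff.mp (hM he)).1
    have hMsnd : ∀ e ∈ M, e.2 ≠ b := fun e he =>
      ne_of_mem_erase (G.mem_interedges_iff.mp (hM he)).2.1
    have habM : (a, b) ∉ M := fun h => hMfst _ h rfl
    refine ⟨insert (a, b) M, insert_subset hab (hM.trans ?_), ?_, ?_, ?_⟩
    · exact G.interedges_mono (erase_subset a X) (erase_subset b Y)
    · rw [card_insert_of_notMem habM, hMk]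
    · rw [coe_insert, Set.injOn_insert (mod_cast habM)]
      exact ⟨hfst, fun ⟨e, he, hea⟩ => hMfst e he hea⟩
    · rw [coe_insert, Set.injOn_insert (mod_cast habM)]
      exact ⟨hsnd, fun ⟨e, he, heb⟩ => hMsnd e he heb⟩

theorem exists_monochromatic_matching_subset_interedges {r : ℕ} [NeZero r] (c : Sym2 V → Fin r)
    {t m : ℕ} {X Y : Finset V}
    (h : ∀ X' ⊆ X, ∀ Y' ⊆ Y, t ≤ #X' → t ≤ #Y' → (G.interedges X' Y').Nonempty)
    (hX : t + r * m ≤ #X) (hY : t + r * m ≤ #Y) :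
    ∃ j, ∃ M ⊆ G.interedges X Y, #M = m ∧
      Set.InjOn Prod.fst (M : Set (V × V)) ∧ Set.InjOn Prod.snd (M : Set (V × V)) ∧
      ∀ e ∈ M, c s(e.1, e.2) = j := by
  obtain ⟨M, hM, hMk, hfst, hsnd⟩ := G.exists_matching_subset_interedges h hX hY
  obtain ⟨j, hj⟩ := exists_le_card_filter_eq M (fun e => c s(e.1, e.2)) (n := m)
    (by rw [Fintype.card_fin, hMk])
  obtain ⟨M', hM'j, hM'⟩ := exists_subset_card_eq hj
  have hM'M : M' ⊆ M := hM'j.trans (filter_subset _ _)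
  exact ⟨j, M', hM'M.trans hM, hM', hfst.mono (mod_cast hM'M), hsnd.mono (mod_cast hM'M),
    fun e he => (mem_filter.mp (hM'j he)).2⟩

theorem exists_monochromatic_cherries_or_rainbow {r : ℕ} [NeZero r] (c : Sym2 V → Fin r)
    {U S N : Finset V} (hS : #S = r) (hNU : N ⊆ U) (hN : ∀ u ∈ N, ∀ v ∈ S, G.Adj v u) {m : ℕ}
    (h : r ^ r * m ≤ #N) :
    (∃ v ∈ S, ∃ v' ∈ S, v ≠ v' ∧ ∃ j, m ≤ #(U.filter fun u =>
        G.Adj v u ∧ G.Adj u v' ∧ c s(v, u) = j ∧ c s(u, v') = j)) ∨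
      ∃ A ⊆ U, m ≤ #A ∧ ∀ j, ∃ v ∈ S, ∀ u ∈ A, G.Adj v u ∧ c s(v, u) = j := by
  obtain ⟨A, hAN, hA, col, hcol⟩ := exists_colour_constant_subset c S N (h.trans_eq' (by rw [hS]))
  have hAU : A ⊆ U := hAN.trans hNU
  have hadj : ∀ v ∈ S, ∀ u ∈ A, G.Adj v u := fun v hv u hu => hN u (hAN hu) v hv
  by_cases hinj : Function.Injective col
  · have hsurj : Function.Surjective col :=
      ((Fintype.bijective_iff_injective_and_card col).mpr ⟨hinj, by simp [hS]⟩).2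
    refine Or.inr ⟨A, hAU, hA, fun j => ?_⟩
    obtain ⟨v, rfl⟩ := hsurj j
    exact ⟨v, v.2, fun u hu => ⟨hadj v v.2 u hu, hcol v u hu⟩⟩
  · obtain ⟨v, v', hvv', hne⟩ : ∃ v v', col v = col v' ∧ v ≠ v' := by
      simpa [Function.Injective] using hinj
    refine Or.inl ⟨v, v.2, v', v'.2, Subtype.coe_ne_coe.mpr hne, col v,
      hA.trans (card_le_card fun u hu => ?_)⟩
    exact mem_filter.mpr ⟨hAU hu, hadj _ v.2 u hu, (hadj _ v'.2 u hu).symm, hcol v u hu,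
      by rw [Sym2.eq_swap, hcol v' u hu, hvv']⟩

theorem exists_monochromatic_paths_of_rainbow {r : ℕ} [NeZero r] (c : Sym2 V → Fin r)
    {U : Finset V} {t m : ℕ}
    (hii : ∀ X ⊆ U, ∀ Y ⊆ U, Disjoint X Y → t ≤ #X → t ≤ #Y → 0 < #(G.interedges X Y))
    {A B S T : Finset V} (hAU : A ⊆ U) (hBU : B ⊆ U)
    (hA : t + r * m ≤ #A) (hB : 2 * (t + r * m) ≤ #B)
    (hSA : ∀ j, ∃ v ∈ S, ∀ u ∈ A, G.Adj v u ∧ c s(v, u) = j)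
    (hTB : ∀ j, ∃ v ∈ T, ∀ u ∈ B, G.Adj v u ∧ c s(v, u) = j) :
    ∃ v ∈ S, ∃ v' ∈ T, ∃ j, ∃ M : Finset (V × V), #M = m ∧
      (∀ e ∈ M, e.1 ∈ U ∧ e.2 ∈ U ∧ e.1 ≠ e.2 ∧ G.Adj e.1 e.2) ∧
      (∀ e ∈ M, ∀ f ∈ M, e ≠ f → e.1 ≠ f.1 ∧ e.1 ≠ f.2 ∧ e.2 ≠ f.1 ∧ e.2 ≠ f.2) ∧
      ∀ e ∈ M,
        (G.Adj v e.1 ∧ G.Adj e.1 e.2 ∧ G.Adj e.2 v' ∧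
          c s(v, e.1) = j ∧ c s(e.1, e.2) = j ∧ c s(e.2, v') = j) ∨
        (G.Adj v e.2 ∧ G.Adj e.2 e.1 ∧ G.Adj e.1 v' ∧
          c s(v, e.2) = j ∧ c s(e.2, e.1) = j ∧ c s(e.1, v') = j) := by
  obtain ⟨A', hA'A, B', hB'B, hdisj, hA', hB'⟩ := exists_disjoint_subsets_of_le_card hA hB
  obtain ⟨j, M, hM, hMm, hfst, hsnd, hMj⟩ := G.exists_monochromatic_matching_subset_interedges c
    (fun X hX Y hY hXt hYt => card_pos.mp (hii X (hX.trans (hA'A.trans hAU))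
      Y (hY.trans (hB'B.trans hBU)) (hdisj.mono hX hY) hXt hYt)) hA' hB'
  obtain ⟨v, hv, hvA⟩ := hSA j
  obtain ⟨v', hv', hv'B⟩ := hTB j
  have hends : ∀ e ∈ M, e.1 ∈ A' ∧ e.2 ∈ B' ∧ G.Adj e.1 e.2 := fun e he =>
    G.mem_interedges_iff.mp (hM he)
  have hne : ∀ e ∈ M, ∀ f ∈ M, e.1 ≠ f.2 := fun e he f hf h =>
    Finset.disjoint_left.mp hdisj (hends e he).1 (h ▸ (hends f hf).2.1)
  refine ⟨v, hv, v', hv', j, M, hMm, fun e he => ?_, fun e he f hf hef => ?_, fun e he => Or.inl ?_⟩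
  · obtain ⟨h₁, h₂, hadj⟩ := hends e he
    exact ⟨hAU (hA'A h₁), hBU (hB'B h₂), hne e he e he, hadj⟩
  · exact ⟨fun h => hef (hfst he hf h), hne e he f hf, (hne f hf e he).symm,
      fun h => hef (hsnd he hf h)⟩
  · obtain ⟨h₁, h₂, hadj⟩ := hends e he
    obtain ⟨hv₁, hc₁⟩ := hvA e.1 (hA'A h₁)
    obtain ⟨hv₂, hc₂⟩ := hv'B e.2 (hB'B h₂)
    exact ⟨hv₁, hadj, hv₂.symm, hc₁, hMj e he, by rw [Sym2.eq_swap, hc₂]⟩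

end SimpleGraph

theorem stmt4_general {V : Type*} [Fintype V] [DecidableEq V] (G : SimpleGraph V) [DecidableRel G.Adj]
    (r t : ℕ) (hr : 2 ≤ r) (U W : Finset V) (c : Sym2 V → Fin r)
    (hi : ∀ S ⊆ W, S.card = r →
      6 * r ^ (r + 1) * t ≤ (U.filter fun u => ∀ v ∈ S, G.Adj v u).card)
    (hii : ∀ X ⊆ U, ∀ Y ⊆ U, Disjoint X Y → t ≤ X.card → t ≤ Y.card →
      0 < (G.interedges X Y).card) :
    ∀ S ⊆ W, S.card = 2 * r → ∃ v ∈ S, ∃ v' ∈ S, v ≠ v' ∧ ∃ j : Fin r,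
      -- (a): at least 2t vertices u ∈ U with v u v' a path of colour j
      (2 * t ≤ (U.filter fun u =>
        G.Adj v u ∧ G.Adj u v' ∧ c s(v, u) = j ∧ c s(u, v') = j).card) ∨
      -- (b): a matching M of size 2t in U with v u u' v' (or v u' u v') a path of colour j
      (∃ M : Finset (V × V), M.card = 2 * t ∧
        (∀ e ∈ M, e.1 ∈ U ∧ e.2 ∈ U ∧ e.1 ≠ e.2 ∧ G.Adj e.1 e.2) ∧
        (∀ e ∈ M, ∀ f ∈ M, e ≠ f →
          e.1 ≠ f.1 ∧ e.1 ≠ f.2 ∧ e.2 ≠ f.1 ∧ e.2 ≠ f.2) ∧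
        (∀ e ∈ M,
          (G.Adj v e.1 ∧ G.Adj e.1 e.2 ∧ G.Adj e.2 v' ∧
            c s(v, e.1) = j ∧ c s(e.1, e.2) = j ∧ c s(e.2, v') = j) ∨
          (G.Adj v e.2 ∧ G.Adj e.2 e.1 ∧ G.Adj e.1 v' ∧
            c s(v, e.2) = j ∧ c s(e.2, e.1) = j ∧ c s(e.1, v') = j))) := by
  have : NeZero r := ⟨by omega⟩
  intro S hSW hS
  obtain ⟨S₁, hS₁S, hS₁⟩ := S.exists_subset_card_eq (show r ≤ #S by omega)
  have hS₂ : #(S \ S₁) = r := by rw [card_sdiff_of_subset hS₁S]; omega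
  have hcommon : ∀ T ⊆ S, #T = r →
      r ^ r * (6 * r * t) ≤ #(U.filter fun u => ∀ v ∈ T, G.Adj v u) := fun T hTS hT =>
    calc r ^ r * (6 * r * t) = 6 * r ^ (r + 1) * t := by ring
      _ ≤ _ := hi T (hTS.trans hSW) hT
  have hcommon_adj : ∀ T : Finset V, ∀ u ∈ U.filter fun u => ∀ v ∈ T, G.Adj v u,
      ∀ v ∈ T, G.Adj v u := fun T u hu => (mem_filter.mp hu).2
  have h2t : 2 * t ≤ 6 * r * t := by nlinarith
  rcases G.exists_monochromatic_cherries_or_rainbow c hS₁ (filter_subset _ U)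
      (hcommon_adj S₁) (hcommon S₁ hS₁S hS₁) with
    ⟨v, hv, v', hv', hne, j, hj⟩ | ⟨A, hAU, hA, hSA⟩
  · exact ⟨v, hS₁S hv, v', hS₁S hv', hne, j, Or.inl (h2t.trans hj)⟩
  rcases G.exists_monochromatic_cherries_or_rainbow c hS₂ (filter_subset _ U)
      (hcommon_adj _) (hcommon _ sdiff_subset hS₂) with
    ⟨v, hv, v', hv', hne, j, hj⟩ | ⟨B, hBU, hB, hTB⟩
  · exact ⟨v, sdiff_subset hv, v', sdiff_subset hv', hne, j, Or.inl (h2t.trans hj)⟩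
  obtain ⟨v, hv, v', hv', j, hpaths⟩ := G.exists_monochromatic_paths_of_rainbow c (m := 2 * t)
    hii hAU hBU (by nlinarith) (by nlinarith) hSA hTB
  exact ⟨v, hS₁S hv, v', sdiff_subset hv', fun h => (mem_sdiff.mp hv').2 (h ▸ hv), j,
    Or.inr hpaths⟩

/-- The independence number of the auxiliary multigraph `H` on `W` (whose edges of colour `j`
are given by conditions (a) and (b)) is at most `2r - 1`: every `2r`-set in `W` spans an
edge of `H`. -/
theorem stmt4 {V : Type*} [Fintype V] [DecidableEq V] (G : SimpleGraph V) [DecidableRel G.Adj]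
    (r t : ℕ) (hr : 2 ≤ r) (ht : 2 ≤ t) (U W : Finset V) (hUW : Disjoint U W)
    (hW : W.card ≤ t) (c : Sym2 V → Fin r)
    (hi : ∀ S ⊆ W, S.card = r →
      6 * r ^ (r + 1) * t ≤ (U.filter fun u => ∀ v ∈ S, G.Adj v u).card)
    (hii : ∀ X ⊆ U, ∀ Y ⊆ U, Disjoint X Y → t ≤ X.card → t ≤ Y.card →
      0 < (G.interedges X Y).card) :
    ∀ S ⊆ W, S.card = 2 * r → ∃ v ∈ S, ∃ v' ∈ S, v ≠ v' ∧ ∃ j : Fin r,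
      -- (a): at least 2t vertices u ∈ U with v u v' a path of colour j
      (2 * t ≤ (U.filter fun u =>
        G.Adj v u ∧ G.Adj u v' ∧ c s(v, u) = j ∧ c s(u, v') = j).card) ∨
      -- (b): a matching M of size 2t in U with v u u' v' (or v u' u v') a path of colour j
      (∃ M : Finset (V × V), M.card = 2 * t ∧
        (∀ e ∈ M, e.1 ∈ U ∧ e.2 ∈ U ∧ e.1 ≠ e.2 ∧ G.Adj e.1 e.2) ∧
        (∀ e ∈ M, ∀ f ∈ M, e ≠ f →
          e.1 ≠ f.1 ∧ e.1 ≠ f.2 ∧ e.2 ≠ f.1 ∧ e.2 ≠ f.2) ∧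
        (∀ e ∈ M,
          (G.Adj v e.1 ∧ G.Adj e.1 e.2 ∧ G.Adj e.2 v' ∧
            c s(v, e.1) = j ∧ c s(e.1, e.2) = j ∧ c s(e.2, v') = j) ∨
          (G.Adj v e.2 ∧ G.Adj e.2 e.1 ∧ G.Adj e.1 v' ∧
            c s(v, e.2) = j ∧ c s(e.2, e.1) = j ∧ c s(e.1, v') = j))) :=
  stmt4_general G r t hr U W c hi hii
end

section
/- Fix 0 < α, β < 1 and let C = 6/(α²β) and D = 9/α². Then for every p = p(n) ∈ (0,1), with high probability the random graph G ~ G(n,p) satisfies: for any two disjoint vertex subsets X, Y with either (|X|, |Y| ≥ D log n / p) or (|X| ≥ C/p and |Y| ≥ βn), one has e(X,Y) = (1 ± α)|X||Y|p. -/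
open scoped NNReal ENNReal
open MeasureTheory Filter

/-- The binomial random graph model `G(n,p)`: the product Bernoulli measure on edge
indicator functions `Sym2 (Fin n) → Bool`. -/
noncomputable def gnp (n : ℕ) (p : ℝ≥0) (hp : p ≤ 1) :
    Measure (Sym2 (Fin n) → Bool) :=
  Measure.pi fun _ => (PMF.bernoulli p hp).toMeasure

/-- The graph determined by an edge indicator function. -/
def graphOf {n : ℕ} (ω : Sym2 (Fin n) → Bool) : SimpleGraph (Fin n) :=
  SimpleGraph.fromEdgeSet {e | ω e = true}

/-- The number of edges of `G` between disjoint vertex sets `X` and `Y`, counted as ordered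
pairs `(x,y)` with `x ∈ X`, `y ∈ Y`. -/
noncomputable def edgeCount {n : ℕ} (G : SimpleGraph (Fin n)) (X Y : Set (Fin n)) : ℕ :=
  {e : Fin n × Fin n | e.1 ∈ X ∧ e.2 ∈ Y ∧ G.Adj e.1 e.2}.ncard


/-!
For fixed disjoint `A` and `B`, `e(A, B)` is a sum of `|A| |B|` independent Bernoulli(`p`)
indicators, so the multiplicative Chernoff bound makes a deviation by more than `α` from the
mean have probability at most `2 exp (-α² |A| |B| p / 4)`; a union bound over pairs finishes.
If `|A|, |B| ≥ D log n / p`, this is at most `2 (n ^ (-9/8)) ^ (|A| + |B|)`, and summing over all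
pairs of nonempty sets gives `O(n ^ (-1/4))`. If `|A| ≥ C / p` and `|B| ≥ β n`, it is at most
`2 exp (-3n/2)`, and there are only `4 ^ n` pairs, with `4 < exp (3/2)`.
-/

open ProbabilityTheory Real Finset
open scoped Topology

section Chernoff

variable {Ω : Type*} {mΩ : MeasurableSpace Ω} {μ : Measure Ω} [IsProbabilityMeasure μ]
  {S : Ω → ℝ} {M α : ℝ}

lemma measureReal_ge_le_of_mgf_le (hint : ∀ t, Integrable (fun ω => exp (t * S ω)) μ)
    (hmgf : ∀ t, mgf S μ t ≤ exp (M * (exp t - 1))) (hM : 0 ≤ M) (hα0 : 0 ≤ α) (hα1 : α ≤ 1) :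
    μ.real {ω | (1 + α) * M ≤ S ω} ≤ exp (-(α ^ 2 / 4) * M) := by
  calc μ.real {ω | (1 + α) * M ≤ S ω}
      ≤ exp (-(α / 2) * ((1 + α) * M)) * mgf S μ (α / 2) :=
        measure_ge_le_exp_mul_mgf _ (by linarith) (hint _)
    _ ≤ exp (-(α / 2) * ((1 + α) * M)) * exp (M * (exp (α / 2) - 1)) := by
        gcongr; exact hmgf _
    _ ≤ exp (-(α ^ 2 / 4) * M) := by
        rw [← exp_add, exp_le_exp]
        have := (abs_le.mp <| abs_exp_sub_one_sub_id_le (x := α / 2)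
          (by rw [abs_le]; constructor <;> linarith)).2
        nlinarith [mul_le_mul_of_nonneg_left this hM]

lemma measureReal_le_le_of_mgf_le (hint : ∀ t, Integrable (fun ω => exp (t * S ω)) μ)
    (hmgf : ∀ t, mgf S μ t ≤ exp (M * (exp t - 1))) (hM : 0 ≤ M) (hα0 : 0 ≤ α) (hα1 : α ≤ 1) :
    μ.real {ω | S ω ≤ (1 - α) * M} ≤ exp (-(α ^ 2 / 4) * M) := by
  calc μ.real {ω | S ω ≤ (1 - α) * M}
      ≤ exp (-(-(α / 2)) * ((1 - α) * M)) * mgf S μ (-(α / 2)) :=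
        measure_le_le_exp_mul_mgf _ (by linarith) (hint _)
    _ ≤ exp (-(-(α / 2)) * ((1 - α) * M)) * exp (M * (exp (-(α / 2)) - 1)) := by
        gcongr; exact hmgf _
    _ ≤ exp (-(α ^ 2 / 4) * M) := by
        rw [← exp_add, exp_le_exp]
        have := (abs_le.mp <| abs_exp_sub_one_sub_id_le (x := -(α / 2))
          (by rw [abs_le]; constructor <;> linarith)).2
        nlinarith [mul_le_mul_of_nonneg_left this hM]

lemma measureReal_deviation_le_of_mgf_le (hint : ∀ t, Integrable (fun ω => exp (t * S ω)) μ)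
    (hmgf : ∀ t, mgf S μ t ≤ exp (M * (exp t - 1))) (hM : 0 ≤ M) (hα0 : 0 ≤ α) (hα1 : α ≤ 1) :
    μ.real {ω | ¬((1 - α) * M ≤ S ω ∧ S ω ≤ (1 + α) * M)} ≤ 2 * exp (-(α ^ 2 / 4) * M) := by
  have hcover : {ω | ¬((1 - α) * M ≤ S ω ∧ S ω ≤ (1 + α) * M)}
      ⊆ {ω | (1 + α) * M ≤ S ω} ∪ {ω | S ω ≤ (1 - α) * M} := by
    intro ω hω
    simp only [Set.mem_ofPred_eq, Set.mem_union, not_and_or, not_le] at hω ⊢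
    rcases hω with h | h
    · exact .inr h.le
    · exact .inl h.le
  calc _ ≤ _ := measureReal_mono hcover
    _ ≤ _ := measureReal_union_le _ _
    _ ≤ _ := by
      linarith [measureReal_ge_le_of_mgf_le hint hmgf hM hα0 hα1,
        measureReal_le_le_of_mgf_le hint hmgf hM hα0 hα1]

end Chernoff

section RandomGraph

def edgeIndicator {n : ℕ} (e : Sym2 (Fin n)) (ω : Sym2 (Fin n) → Bool) : ℝ :=
  if ω e then 1 else 0

def crossEdges {n : ℕ} (A B : Finset (Fin n)) : Finset (Sym2 (Fin n)) :=
  (A ×ˢ B).image fun q => s(q.1, q.2)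

def edgeDeviation {n : ℕ} (α : ℝ) (p : ℝ≥0) (A B : Finset (Fin n)) :
    Set (Sym2 (Fin n) → Bool) :=
  {ω | ¬((1 - α) * #A * #B * p ≤ (edgeCount (graphOf ω) ↑A ↑B : ℝ) ∧
    (edgeCount (graphOf ω) ↑A ↑B : ℝ) ≤ (1 + α) * #A * #B * p)}

variable {n : ℕ} {p : ℝ≥0} {α : ℝ} {A B : Finset (Fin n)}

instance isProbabilityMeasure_gnp (hp : p ≤ 1) : IsProbabilityMeasure (gnp n p hp) := by
  unfold gnp; infer_instance

lemma iIndepFun_edgeIndicator (hp : p ≤ 1) : iIndepFun edgeIndicator (gnp n p hp) :=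
  iIndepFun_pi (X := fun _ (b : Bool) => if b then (1 : ℝ) else 0)
    fun _ => (measurable_of_finite _).aemeasurable

lemma mgf_edgeIndicator (hp : p ≤ 1) (e : Sym2 (Fin n)) (t : ℝ) :
    mgf (edgeIndicator e) (gnp n p hp) t = p * exp t + (1 - p) := by
  rw [mgf, gnp]
  refine (integral_comp_eval (X := fun _ => Bool) (i := e)
    (f := fun b => exp (t * if b then 1 else 0))
    (measurable_of_finite _).aestronglyMeasurable).trans ?_
  simp [PMF.integral_eq_sum, PMF.bernoulli_apply, NNReal.coe_sub hp]

lemma mgf_sum_edgeIndicator_le (hp : p ≤ 1) (E : Finset (Sym2 (Fin n))) (t : ℝ) :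
    mgf (∑ e ∈ E, edgeIndicator e) (gnp n p hp) t ≤ exp (#E * p * (exp t - 1)) := by
  rw [(iIndepFun_edgeIndicator hp).mgf_sum (fun _ => measurable_of_finite _)]
  simp_rw [mgf_edgeIndicator hp, prod_const]
  calc (p * exp t + (1 - p)) ^ #E ≤ exp (p * (exp t - 1)) ^ #E := by
        gcongr
        · have : (p : ℝ) ≤ 1 := hp
          nlinarith [exp_pos t]
        · linarith [add_one_le_exp (p * (exp t - 1))]
    _ = exp (#E * p * (exp t - 1)) := by rw [← exp_nat_mul, mul_assoc]

lemma injOn_sym2Mk_of_disjoint (hd : Disjoint A B) :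
    Set.InjOn (fun q : Fin n × Fin n => s(q.1, q.2)) ↑(A ×ˢ B) := by
  rintro ⟨a, b⟩ hab ⟨c, d⟩ hcd h
  simp only [coe_product, Set.mem_prod, mem_coe] at hab hcd
  rcases Sym2.eq_iff.mp h with ⟨rfl, rfl⟩ | ⟨rfl, rfl⟩
  · rfl
  · exact (disjoint_left.mp hd hcd.1 hab.2).elim

lemma card_crossEdges (hd : Disjoint A B) : #(crossEdges A B) = #A * #B := by
  rw [crossEdges, card_image_of_injOn (injOn_sym2Mk_of_disjoint hd), card_product]

lemma edgeCount_graphOf_eq_sum (hd : Disjoint A B) (ω : Sym2 (Fin n) → Bool) :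
    (edgeCount (graphOf ω) ↑A ↑B : ℝ) = ∑ e ∈ crossEdges A B, edgeIndicator e ω := by
  have hpairs : {q : Fin n × Fin n | q.1 ∈ (A : Set (Fin n)) ∧ q.2 ∈ (B : Set (Fin n)) ∧
      (graphOf ω).Adj q.1 q.2} = ↑((A ×ˢ B).filter fun q => ω s(q.1, q.2)) := by
    ext ⟨a, b⟩
    simp only [graphOf, SimpleGraph.fromEdgeSet_adj, Set.mem_ofPred_eq, coe_filter, mem_product,
      mem_coe]
    exact ⟨fun ⟨ha, hb, hab, _⟩ => ⟨⟨ha, hb⟩, hab⟩,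
      fun ⟨⟨ha, hb⟩, hab⟩ => ⟨ha, hb, hab, fun h => disjoint_left.mp hd ha (h ▸ hb)⟩⟩
  simp only [edgeIndicator, sum_boole, crossEdges, filter_image]
  rw [edgeCount, hpairs, Set.ncard_coe_finset, card_image_of_injOn
    ((injOn_sym2Mk_of_disjoint hd).mono fun q hq => by simpa using (mem_filter.mp hq).1)]

lemma measureReal_edgeDeviation_le (hp : p ≤ 1) (hd : Disjoint A B) (hα0 : 0 ≤ α)
    (hα1 : α ≤ 1) :
    (gnp n p hp).real (edgeDeviation α p A B) ≤ 2 * exp (-(α ^ 2 / 4) * (#A * #B * p)) := by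
  have hM : (#A * #B * p : ℝ) = #(crossEdges A B) * p := by
    rw [card_crossEdges hd]; push_cast; rfl
  have hevent : edgeDeviation α p A B = {ω | ¬((1 - α) * (#A * #B * p) ≤
      (∑ e ∈ crossEdges A B, edgeIndicator e) ω ∧
      (∑ e ∈ crossEdges A B, edgeIndicator e) ω ≤ (1 + α) * (#A * #B * p))} := by
    ext ω
    simp only [edgeDeviation, Set.mem_ofPred_eq, edgeCount_graphOf_eq_sum hd, Finset.sum_apply,
      mul_assoc]
  rw [hevent, hM]
  exact measureReal_deviation_le_of_mgf_le (fun _ => .of_finite)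
    (mgf_sum_edgeIndicator_le hp _) (by positivity) hα0 hα1

lemma measureReal_biUnion_edgeDeviation_le (hp : p ≤ 1) (hα0 : 0 ≤ α) (hα1 : α ≤ 1)
    (Q : ℕ → ℕ → Prop) [DecidableRel Q] :
    (gnp n p hp).real (⋃ AB ∈ univ.filter (fun AB : Finset (Fin n) × Finset (Fin n) =>
        Disjoint AB.1 AB.2 ∧ Q #AB.1 #AB.2), edgeDeviation α p AB.1 AB.2)
      ≤ 2 * ∑ AB ∈ univ.filter (fun AB : Finset (Fin n) × Finset (Fin n) => Q #AB.1 #AB.2),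
        exp (-(α ^ 2 / 4) * (#AB.1 * #AB.2 * p)) := by
  rw [mul_sum]
  refine (measureReal_biUnion_finset_le _ _).trans <| (sum_le_sum fun AB hAB =>
    measureReal_edgeDeviation_le hp (mem_filter.mp hAB).2.1 hα0 hα1).trans <|
    sum_le_sum_of_subset_of_nonneg (monotone_filter_right _ fun _ _ h => h.2)
      fun _ _ _ => by positivity

lemma compl_subset_biUnion_edgeDeviation (α : ℝ) (p : ℝ≥0) (Q₁ Q₂ : ℕ → ℕ → Prop)
    [DecidableRel Q₁] [DecidableRel Q₂] :
    {ω : Sym2 (Fin n) → Bool | ∀ X Y : Set (Fin n), Disjoint X Y →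
      Q₁ X.ncard Y.ncard ∨ Q₂ X.ncard Y.ncard →
      (1 - α) * (X.ncard : ℝ) * (Y.ncard : ℝ) * (p : ℝ) ≤ (edgeCount (graphOf ω) X Y : ℝ) ∧
      (edgeCount (graphOf ω) X Y : ℝ) ≤ (1 + α) * (X.ncard : ℝ) * (Y.ncard : ℝ) * (p : ℝ)}ᶜ
    ⊆ (⋃ AB ∈ univ.filter (fun AB : Finset (Fin n) × Finset (Fin n) =>
        Disjoint AB.1 AB.2 ∧ Q₁ #AB.1 #AB.2), edgeDeviation α p AB.1 AB.2) ∪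
      (⋃ AB ∈ univ.filter (fun AB : Finset (Fin n) × Finset (Fin n) =>
        Disjoint AB.1 AB.2 ∧ Q₂ #AB.1 #AB.2), edgeDeviation α p AB.1 AB.2) := by
  intro ω hω
  simp only [Set.mem_compl_iff, Set.mem_ofPred_eq, not_forall] at hω
  obtain ⟨X, Y, hXY, hQ, hdev⟩ := hω
  obtain ⟨A, rfl⟩ := X.toFinite.exists_finset_coe
  obtain ⟨B, rfl⟩ := Y.toFinite.exists_finset_coe
  rw [Set.ncard_coe_finset, Set.ncard_coe_finset] at hQ hdev
  have hAB := disjoint_coe.mp hXY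
  rcases hQ with hQ | hQ
  · exact .inl (Set.mem_iUnion₂.mpr ⟨(A, B), mem_filter.mpr ⟨mem_univ _, hAB, hQ⟩, hdev⟩)
  · exact .inr (Set.mem_iUnion₂.mpr ⟨(A, B), mem_filter.mpr ⟨mem_univ _, hAB, hQ⟩, hdev⟩)

end RandomGraph

section Counting

lemma sum_nonempty_pow_card_le (ι : Type*) [Fintype ι] {y : ℝ} (hy : 0 ≤ y) :
    ∑ A ∈ univ.filter (fun A : Finset ι => A.Nonempty), y ^ #A
      ≤ exp (Fintype.card ι * y) - 1 := by
  classical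
  have hall : ∑ A : Finset ι, y ^ #A = (y + 1) ^ Fintype.card ι := by
    simpa using Fintype.sum_pow_mul_eq_add_pow ι y 1
  rw [← sum_filter_add_sum_filter_not univ (fun A : Finset ι => A.Nonempty)] at hall
  have hempty : univ.filter (fun A : Finset ι => ¬A.Nonempty) = {∅} := by
    ext A; simp [not_nonempty_iff_eq_empty]
  rw [hempty, sum_singleton, card_empty, pow_zero] at hall
  calc _ = (y + 1) ^ Fintype.card ι - 1 := by linarith
    _ ≤ exp y ^ Fintype.card ι - 1 := by gcongr; linarith [add_one_le_exp y]
    _ = _ := by rw [← exp_nat_mul]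

variable {n : ℕ} {α p : ℝ}

lemma exp_neg_le_pow_mul_pow_of_le_card {a b : ℕ} {L : ℝ} (hα : 0 < α) (hp : 0 < p)
    (ha : 9 / α ^ 2 * L / p ≤ a) (hb : 9 / α ^ 2 * L / p ≤ b) :
    exp (-(α ^ 2 / 4) * (a * b * p)) ≤ exp (-(9 / 8) * L) ^ a * exp (-(9 / 8) * L) ^ b := by
  rw [div_le_iff₀ hp] at ha hb
  rw [← exp_nat_mul, ← exp_nat_mul, ← exp_add, exp_le_exp]
  -- `a b p ≥ (a + b) D L / 2`, as both `a p` and `b p` are at least `D L`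
  have hαa := mul_le_mul_of_nonneg_left ha (sq_nonneg α)
  have hαb := mul_le_mul_of_nonneg_left hb (sq_nonneg α)
  field_simp at hαa hαb
  nlinarith [mul_le_mul_of_nonneg_left hαa (Nat.cast_nonneg (α := ℝ) b),
    mul_le_mul_of_nonneg_left hαb (Nat.cast_nonneg (α := ℝ) a)]

lemma sum_exp_neg_le_of_log_le_card (hn : 2 ≤ n) (hα : 0 < α) (hp : 0 < p) :
    ∑ AB ∈ univ.filter (fun AB : Finset (Fin n) × Finset (Fin n) =>
        9 / α ^ 2 * log n / p ≤ #AB.1 ∧ 9 / α ^ 2 * log n / p ≤ #AB.2),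
      exp (-(α ^ 2 / 4) * (#AB.1 * #AB.2 * p))
      ≤ (exp ((n : ℝ) ^ (-(1 / 8) : ℝ)) - 1) ^ 2 := by
  have hn0 : (0 : ℝ) < n := by positivity
  have hthreshold : 0 < 9 / α ^ 2 * log n / p := by
    have : 0 < log n := log_pos (by exact_mod_cast hn)
    positivity
  set y := exp (-(9 / 8) * log n) with hy
  have hny : n * y = (n : ℝ) ^ (-(1 / 8) : ℝ) := by
    rw [rpow_def_of_pos hn0, hy]
    nth_rewrite 1 [← exp_log hn0]
    rw [← exp_add]; ring_nf
  have hterm : ∀ AB ∈ univ.filter (fun AB : Finset (Fin n) × Finset (Fin n) =>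
        9 / α ^ 2 * log n / p ≤ #AB.1 ∧ 9 / α ^ 2 * log n / p ≤ #AB.2),
      exp (-(α ^ 2 / 4) * (#AB.1 * #AB.2 * p)) ≤ y ^ #AB.1 * y ^ #AB.2 := fun AB hAB =>
    exp_neg_le_pow_mul_pow_of_le_card hα hp (mem_filter.mp hAB).2.1 (mem_filter.mp hAB).2.2
  have hnonempty : univ.filter (fun AB : Finset (Fin n) × Finset (Fin n) =>
        9 / α ^ 2 * log n / p ≤ #AB.1 ∧ 9 / α ^ 2 * log n / p ≤ #AB.2)
      ⊆ univ.filter (fun A : Finset (Fin n) => A.Nonempty) ×ˢ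
        univ.filter (fun B : Finset (Fin n) => B.Nonempty) := by
    rintro ⟨A, B⟩ hAB
    obtain ⟨hA, hB⟩ := (mem_filter.mp hAB).2
    simp only [mem_product, mem_filter, mem_univ, true_and, ← card_pos]
    exact ⟨by exact_mod_cast hthreshold.trans_le hA, by exact_mod_cast hthreshold.trans_le hB⟩
  calc _ ≤ ∑ AB ∈ univ.filter (fun A : Finset (Fin n) => A.Nonempty) ×ˢ
        univ.filter (fun B : Finset (Fin n) => B.Nonempty), y ^ #AB.1 * y ^ #AB.2 :=
        (sum_le_sum hterm).trans (sum_le_sum_of_subset_of_nonneg hnonempty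
          fun _ _ _ => by positivity)
    _ = (∑ A ∈ univ.filter (fun A : Finset (Fin n) => A.Nonempty), y ^ #A) ^ 2 := by
        rw [sum_product, sq, sum_mul_sum]
    _ ≤ (exp (n * y) - 1) ^ 2 := by
        gcongr
        simpa using sum_nonempty_pow_card_le (Fin n) (exp_nonneg _)
    _ = _ := by rw [hny]

lemma sum_exp_neg_le_of_linear_le_card {β : ℝ} (hα : 0 < α) (hβ : 0 < β) (hp : 0 < p) :
    ∑ AB ∈ univ.filter (fun AB : Finset (Fin n) × Finset (Fin n) =>
        6 / (α ^ 2 * β) / p ≤ #AB.1 ∧ β * n ≤ #AB.2),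
      exp (-(α ^ 2 / 4) * (#AB.1 * #AB.2 * p))
      ≤ (4 * exp (-(3 / 2))) ^ n := by
  have hterm : ∀ AB ∈ univ.filter (fun AB : Finset (Fin n) × Finset (Fin n) =>
        6 / (α ^ 2 * β) / p ≤ #AB.1 ∧ β * n ≤ #AB.2),
      exp (-(α ^ 2 / 4) * (#AB.1 * #AB.2 * p)) ≤ exp (-(3 / 2)) ^ n := by
    rintro ⟨A, B⟩ hAB
    obtain ⟨hA, hB⟩ := (mem_filter.mp hAB).2
    rw [div_le_iff₀ hp, div_le_iff₀ (by positivity)] at hA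
    rw [← exp_nat_mul, exp_le_exp]
    nlinarith [mul_le_mul hA hB (by positivity) (by positivity)]
  calc _ ≤ ∑ AB : Finset (Fin n) × Finset (Fin n), exp (-(3 / 2)) ^ n :=
        (sum_le_sum hterm).trans (sum_le_sum_of_subset_of_nonneg (subset_univ _)
          fun _ _ _ => by positivity)
    _ = _ := by
        simp only [sum_const, card_univ, Fintype.card_prod, Fintype.card_finset, Fintype.card_fin,
          nsmul_eq_mul]
        push_cast; rw [← mul_pow, ← mul_pow]; norm_num

lemma four_mul_exp_neg_three_halves_lt_one : 4 * exp (-(3 / 2)) < 1 := by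
  rw [exp_neg, ← div_eq_mul_inv, div_lt_one (exp_pos _)]
  have hhalf := add_one_le_exp (1 / 2)
  calc (4 : ℝ) < exp 1 * (1 / 2 + 1) := by linarith [exp_one_gt_d9]
    _ ≤ exp 1 * exp (1 / 2) := by gcongr
    _ = exp (3 / 2) := by rw [← exp_add]; norm_num

lemma tendsto_union_bound_zero :
    Tendsto (fun n : ℕ =>
      2 * (exp ((n : ℝ) ^ (-(1 / 8) : ℝ)) - 1) ^ 2 + 2 * (4 * exp (-(3 / 2))) ^ n) atTop (𝓝 0) := by
  have hsmall := (tendsto_rpow_neg_atTop (by norm_num : (0 : ℝ) < 1 / 8)).comp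
    tendsto_natCast_atTop_atTop
  have hlarge := tendsto_pow_atTop_nhds_zero_of_lt_one (by positivity)
    four_mul_exp_neg_three_halves_lt_one
  simpa using (((((continuous_exp.tendsto 0).comp hsmall).sub_const 1).pow 2).const_mul 2).add
    (hlarge.const_mul 2)

end Counting

lemma tendsto_measure_one_of_measureReal_compl_le {Ω : ℕ → Type*} [∀ n, MeasurableSpace (Ω n)]
    {μ : ∀ n, Measure (Ω n)} [∀ n, IsProbabilityMeasure (μ n)] {s : ∀ n, Set (Ω n)}
    (hs : ∀ n, MeasurableSet (s n)) {b : ℕ → ℝ} (hb : Tendsto b atTop (𝓝 0))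
    (hle : ∀ᶠ n in atTop, (μ n).real (s n)ᶜ ≤ b n) :
    Tendsto (fun n => μ n (s n)) atTop (𝓝 1) := by
  have hreal : Tendsto (fun n => (μ n).real (s n)) atTop (𝓝 1) := by
    refine tendsto_of_tendsto_of_tendsto_of_le_of_le' (by simpa using hb.const_sub 1)
      tendsto_const_nhds ?_ (.of_forall fun n => measureReal_le_one)
    filter_upwards [hle] with n hn
    rw [probReal_compl_eq_one_sub (hs n)] at hn
    linarith
  simpa [ofReal_measureReal] using ENNReal.tendsto_ofReal hreal

theorem stmt12_general (α β : ℝ) (hα : 0 < α) (hα1 : α < 1) (hβ : 0 < β)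
    (C D : ℝ) (hC : C = 6 / (α ^ 2 * β)) (hD : D = 9 / α ^ 2)
    (p : ℕ → ℝ≥0) (hp0 : ∀ n, 0 < p n) (hp1 : ∀ n, p n < 1) :
    Tendsto (fun n => gnp n (p n) (hp1 n).le
      {ω | ∀ X Y : Set (Fin n), Disjoint X Y →
        ((D * Real.log n / (p n : ℝ) ≤ (X.ncard : ℝ) ∧
            D * Real.log n / (p n : ℝ) ≤ (Y.ncard : ℝ)) ∨
         (C / (p n : ℝ) ≤ (X.ncard : ℝ) ∧ β * n ≤ (Y.ncard : ℝ))) →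
        (1 - α) * (X.ncard : ℝ) * (Y.ncard : ℝ) * (p n : ℝ)
          ≤ (edgeCount (graphOf ω) X Y : ℝ) ∧
        (edgeCount (graphOf ω) X Y : ℝ)
          ≤ (1 + α) * (X.ncard : ℝ) * (Y.ncard : ℝ) * (p n : ℝ)})
      atTop (nhds 1) := by
  subst hC hD
  refine tendsto_measure_one_of_measureReal_compl_le (fun n => (Set.toFinite _).measurableSet)
    tendsto_union_bound_zero ?_
  filter_upwards [eventually_ge_atTop 2] with n hn
  have hp : (0 : ℝ) < p n := hp0 n
  let Q₁ : ℕ → ℕ → Prop := fun a b =>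
    9 / α ^ 2 * log n / (p n : ℝ) ≤ a ∧ 9 / α ^ 2 * log n / (p n : ℝ) ≤ b
  let Q₂ : ℕ → ℕ → Prop := fun a b => 6 / (α ^ 2 * β) / (p n : ℝ) ≤ a ∧ β * n ≤ b
  refine (measureReal_mono (compl_subset_biUnion_edgeDeviation α (p n) Q₁ Q₂)
    (measure_ne_top _ _)).trans <| (measureReal_union_le _ _).trans <| add_le_add
      ((measureReal_biUnion_edgeDeviation_le (hp1 n).le hα.le hα1.le Q₁).trans ?_)
      ((measureReal_biUnion_edgeDeviation_le (hp1 n).le hα.le hα1.le Q₂).trans ?_)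
  · exact mul_le_mul_of_nonneg_left (sum_exp_neg_le_of_log_le_card hn hα hp) zero_le_two
  · exact mul_le_mul_of_nonneg_left (sum_exp_neg_le_of_linear_le_card hα hβ hp) zero_le_two

/-- Lemma 4.2: with `C = 6/(α²β)` and `D = 9/α²`, w.h.p. any two disjoint sets `X,Y` with
`|X|,|Y| ≥ D log n/p`, or with `|X| ≥ C/p` and `|Y| ≥ βn`, satisfy
`e(X,Y) = (1 ± α)|X||Y|p`. -/
theorem stmt12 (α β : ℝ) (hα : 0 < α) (hα1 : α < 1) (hβ : 0 < β) (hβ1 : β < 1)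
    (C D : ℝ) (hC : C = 6 / (α ^ 2 * β)) (hD : D = 9 / α ^ 2)
    (p : ℕ → ℝ≥0) (hp0 : ∀ n, 0 < p n) (hp1 : ∀ n, p n < 1) :
    Tendsto (fun n => gnp n (p n) (hp1 n).le
      {ω | ∀ X Y : Set (Fin n), Disjoint X Y →
        ((D * Real.log n / (p n : ℝ) ≤ (X.ncard : ℝ) ∧
            D * Real.log n / (p n : ℝ) ≤ (Y.ncard : ℝ)) ∨
         (C / (p n : ℝ) ≤ (X.ncard : ℝ) ∧ β * n ≤ (Y.ncard : ℝ))) →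
        (1 - α) * (X.ncard : ℝ) * (Y.ncard : ℝ) * (p n : ℝ)
          ≤ (edgeCount (graphOf ω) X Y : ℝ) ∧
        (edgeCount (graphOf ω) X Y : ℝ)
          ≤ (1 + α) * (X.ncard : ℝ) * (Y.ncard : ℝ) * (p n : ℝ)})
      atTop (nhds 1) :=
  stmt12_general α β hα hα1 hβ C D hC hD p hp0 hp1
end
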